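/- arXiv:1204.2021 — 3 statements merged into one kernel-verified Lean document; each statement's English description precedes it below -/
import Mathlib

section
/- Let G be a finite undirected simple graph in which every vertex has positive degree, let S ⊆ V be nonempty, and let M := (D⁻¹A + I)/2 be the lazy random walk matrix. Then for every integer t ≥ 1, π_S' (I_S M I_S)^t 1_S ≥ (1 − φ(S)/2) · π_S' (I_S M I_S)^{t−1} 1_S, and consequently for every integer t ≥ 0, π_S' (I_S M I_S)^t 1_S ≥ (1 − φ(S)/2)^t. (Equivalently: the expected probability, over a starting vertex v drawn from π_S, that a t-step lazy random walk started at v remains entirely inside S is at least (1 − φ(S)/2)^t.) -/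
/-!
For the degree inner product `⟨x, y⟩_D = xᵀ D y`, the killed walk `N = I_S M I_S` is self-adjoint
and positive semidefinite, because `D M = (A + D) / 2` is half the signless Laplacian. Hence
`q t = ⟨1_S, N^t 1_S⟩_D` equals `⟨N^a 1_S, N^b 1_S⟩_D` whenever `a + b = t`, and Cauchy–Schwarz for
`⟨·, ·⟩_D` or `⟨·, N ·⟩_D` (according to the parity of `t`) makes `q` log-convex:
`q (t+1)^2 ≤ q t * q (t+2)`. So the ratios `q (t+1) / q t` increase, and the first one is
`(μ(S) - ∂(S)/2) / μ(S) = 1 - φ(S)/2`. Finally `π_Sᵀ N^t 1_S = q t / μ(S)`.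
-/

open Matrix Finset

variable {V : Type*} [Fintype V] [DecidableEq V]

/-- Volume of a set of vertices: sum of degrees. -/
noncomputable def vol (G : SimpleGraph V) [DecidableRel G.Adj] (S : Finset V) : ℝ :=
  ∑ v ∈ S, (G.degree v : ℝ)

/-- Number of edges leaving `S`. -/
noncomputable def cut (G : SimpleGraph V) [DecidableRel G.Adj] (S : Finset V) : ℝ :=
  ∑ u ∈ S, ∑ v ∈ Sᶜ, if G.Adj u v then (1 : ℝ) else 0

/-- Conductance of `S`. -/
noncomputable def conduct (G : SimpleGraph V) [DecidableRel G.Adj] (S : Finset V) : ℝ :=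
  cut G S / vol G S

/-- Lazy random walk matrix `M = (D⁻¹ A + I)/2`. -/
noncomputable def lazy (G : SimpleGraph V) [DecidableRel G.Adj] : Matrix V V ℝ :=
  (2 : ℝ)⁻¹ • (Matrix.diagonal (fun v => ((G.degree v : ℝ))⁻¹) * G.adjMatrix ℝ + 1)

/-- Diagonal 0/1 indicator matrix of `S`. -/
def indMat (S : Finset V) : Matrix V V ℝ :=
  Matrix.diagonal (fun v => if v ∈ S then (1 : ℝ) else 0)

/-- Indicator column vector of `S`. -/
def indVec (S : Finset V) : V → ℝ := fun v => if v ∈ S then (1 : ℝ) else 0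

/-- The distribution `π_S` proportional to degrees on `S`. -/
noncomputable def piVec (G : SimpleGraph V) [DecidableRel G.Adj] (S : Finset V) : V → ℝ :=
  fun v => if v ∈ S then (G.degree v : ℝ) / vol G S else 0

namespace Matrix

variable {n : Type*} [Fintype n] [DecidableEq n] {W P : Matrix n n ℝ}

theorem transpose_pow_mul_of_transpose_mul (h : Pᵀ * W = W * P) (k : ℕ) :
    (P ^ k)ᵀ * W = W * P ^ k := by
  induction k with
  | zero => simp
  | succ k ih => rw [pow_succ, transpose_mul, Matrix.mul_assoc, ih, ← Matrix.mul_assoc, h,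
      Matrix.mul_assoc, pow_mul_comm']

theorem dotProduct_mul_pow_add_add_mulVec (h : Pᵀ * W = W * P) (x y : n → ℝ) (a b c : ℕ) :
    x ⬝ᵥ (W * P ^ (a + b + c)) *ᵥ y = (P ^ a *ᵥ x) ⬝ᵥ (W * P ^ b) *ᵥ (P ^ c *ᵥ y) := by
  rw [pow_add, pow_add, ← Matrix.mul_assoc, ← Matrix.mul_assoc,
    ← transpose_pow_mul_of_transpose_mul h, ← mulVec_mulVec, Matrix.mul_assoc, ← mulVec_mulVec,
    dotProduct_mulVec, vecMul_transpose]

variable (hW : ∀ y, 0 ≤ y ⬝ᵥ W *ᵥ y) (hWP : ∀ y, 0 ≤ y ⬝ᵥ (W * P) *ᵥ y)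
include hW hWP

theorem dotProduct_mul_pow_mod_two_mulVec_self_nonneg (t : ℕ) (y : n → ℝ) :
    0 ≤ y ⬝ᵥ (W * P ^ (t % 2)) *ᵥ y := by
  rcases Nat.mod_two_eq_zero_or_one t with h | h <;> rw [h]
  · simpa using hW y
  · simpa using hWP y

theorem dotProduct_mul_pow_mulVec_self_nonneg (h : Pᵀ * W = W * P) (x : n → ℝ) (t : ℕ) :
    0 ≤ x ⬝ᵥ (W * P ^ t) *ᵥ x := by
  have ht : t = t / 2 + t % 2 + t / 2 := by omega
  rw [ht, dotProduct_mul_pow_add_add_mulVec h]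
  exact dotProduct_mul_pow_mod_two_mulVec_self_nonneg hW hWP t _

theorem sq_dotProduct_mul_pow_succ_mulVec_le (h : Pᵀ * W = W * P) (x : n → ℝ) (t : ℕ) :
    (x ⬝ᵥ (W * P ^ (t + 1)) *ᵥ x) ^ 2 ≤
      (x ⬝ᵥ (W * P ^ t) *ᵥ x) * (x ⬝ᵥ (W * P ^ (t + 2)) *ᵥ x) := by
  let B : LinearMap.BilinForm ℝ (n → ℝ) := toLinearMap₂' ℝ (W * P ^ (t % 2))
  have hB (a b : ℕ) : B (P ^ a *ᵥ x) (P ^ b *ᵥ x) = x ⬝ᵥ (W * P ^ (a + t % 2 + b)) *ᵥ x := by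
    rw [toLinearMap₂'_apply', dotProduct_mul_pow_add_add_mulVec h]
  have hCS := B.apply_mul_apply_le_of_forall_zero_le
    (fun y => by
      rw [toLinearMap₂'_apply']
      exact dotProduct_mul_pow_mod_two_mulVec_self_nonneg hW hWP t y)
    (P ^ (t / 2) *ᵥ x) (P ^ (t / 2 + 1) *ᵥ x)
  have e₀ : t / 2 + t % 2 + t / 2 = t := by omega
  have e₁ : t / 2 + t % 2 + (t / 2 + 1) = t + 1 := by omega
  have e₁' : t / 2 + 1 + t % 2 + t / 2 = t + 1 := by omega
  have e₂ : t / 2 + 1 + t % 2 + (t / 2 + 1) = t + 2 := by omega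
  rwa [hB, hB, hB, hB, e₀, e₁, e₁', e₂, ← sq] at hCS

end Matrix

theorem mul_le_succ_of_sq_le_mul {q : ℕ → ℝ} {r : ℝ} (hq : ∀ t, 0 ≤ q t)
    (hlc : ∀ t, q (t + 1) ^ 2 ≤ q t * q (t + 2)) (h₀ : r * q 0 ≤ q 1) :
    ∀ t, r * q t ≤ q (t + 1)
  | 0 => h₀
  | t + 1 => by
    have ih := mul_le_succ_of_sq_le_mul hq hlc h₀ t
    rcases (hq t).eq_or_lt with h | h
    · have : q (t + 1) = 0 := pow_eq_zero_iff two_ne_zero |>.mp <|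
        le_antisymm (by simpa [← h] using hlc t) (sq_nonneg _)
      rw [this, mul_zero]
      exact hq _
    · refine le_of_mul_le_mul_left ?_ h
      calc q t * (r * q (t + 1)) = q (t + 1) * (r * q t) := by ring
        _ ≤ q (t + 1) * q (t + 1) := mul_le_mul_of_nonneg_left ih (hq _)
        _ ≤ q t * q (t + 2) := by rw [← sq]; exact hlc t

namespace SimpleGraph

variable (G : SimpleGraph V) [DecidableRel G.Adj]

theorem dotProduct_adjMatrix_add_degMatrix_mulVec_self (x : V → ℝ) :
    x ⬝ᵥ (G.adjMatrix ℝ + G.degMatrix ℝ) *ᵥ x =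
      (∑ i : V, ∑ j : V, if G.Adj i j then (x i + x j) ^ 2 else 0) / 2 := by
  simp_rw [add_mulVec, dotProduct_add, dotProduct_mulVec_degMatrix,
    dotProduct_mulVec_adjMatrix, ← sum_add_distrib, degree_eq_sum_if_adj, sum_mul, ite_mul,
    one_mul, zero_mul, ← sum_add_distrib, ite_add_ite, add_zero]
  rw [eq_div_iff two_ne_zero, mul_two]
  nth_rewrite 2 [sum_comm]
  rw [← sum_add_distrib]
  refine sum_congr rfl fun i _ => ?_
  rw [← sum_add_distrib]
  refine sum_congr rfl fun j _ => ?_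
  simp only [G.adj_comm j i]
  split_ifs <;> ring

theorem degMatrix_mul_lazy :
    G.degMatrix ℝ * lazy G = (2 : ℝ)⁻¹ • (G.adjMatrix ℝ + G.degMatrix ℝ) := by
  rw [lazy, degMatrix, mul_smul_comm, Matrix.mul_add, ← Matrix.mul_assoc, diagonal_mul_diagonal,
    Matrix.mul_one]
  congr 2
  ext v u
  rw [diagonal_mul, adjMatrix_apply]
  split_ifs with h
  · rw [mul_inv_cancel₀ (mod_cast ((G.degree_pos_iff_exists_adj v).mpr ⟨u, h⟩).ne'), one_mul]
  · rw [mul_zero]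

theorem transpose_lazy_mul_degMatrix : (lazy G)ᵀ * G.degMatrix ℝ = G.degMatrix ℝ * lazy G :=
  calc (lazy G)ᵀ * G.degMatrix ℝ = (G.degMatrix ℝ * lazy G)ᵀ := by
        rw [transpose_mul, (G.isSymm_degMatrix ℝ).eq]
    _ = G.degMatrix ℝ * lazy G := by
        rw [degMatrix_mul_lazy, transpose_smul, transpose_add, G.isSymm_adjMatrix.eq,
          (G.isSymm_degMatrix ℝ).eq]

theorem dotProduct_degMatrix_mulVec_self_nonneg (y : V → ℝ) : 0 ≤ y ⬝ᵥ G.degMatrix ℝ *ᵥ y := by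
  rw [dotProduct_mulVec_degMatrix]
  exact sum_nonneg fun v _ => by
    rw [mul_assoc]
    exact mul_nonneg (Nat.cast_nonneg _) (mul_self_nonneg _)

variable (S : Finset V)

noncomputable def killedLazy : Matrix V V ℝ := indMat S * lazy G * indMat S

theorem indMat_mulVec_indVec : indMat S *ᵥ indVec S = indVec S := by
  ext v
  simp [indMat, indVec, mulVec_diagonal]

omit [Fintype V] in
theorem transpose_indMat : (indMat S)ᵀ = indMat S := diagonal_transpose _

theorem degMatrix_mul_indMat : G.degMatrix ℝ * indMat S = indMat S * G.degMatrix ℝ := by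
  rw [degMatrix, indMat, diagonal_mul_diagonal, diagonal_mul_diagonal]
  simp_rw [mul_comm]

theorem degMatrix_mul_killedLazy :
    G.degMatrix ℝ * G.killedLazy S = indMat S * (G.degMatrix ℝ * lazy G) * indMat S := by
  rw [killedLazy, ← Matrix.mul_assoc, ← Matrix.mul_assoc, degMatrix_mul_indMat,
    Matrix.mul_assoc (indMat S)]

theorem transpose_killedLazy_mul_degMatrix :
    (G.killedLazy S)ᵀ * G.degMatrix ℝ = G.degMatrix ℝ * G.killedLazy S := by
  rw [degMatrix_mul_killedLazy, killedLazy, transpose_mul, transpose_mul, transpose_indMat,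
    Matrix.mul_assoc, Matrix.mul_assoc, ← degMatrix_mul_indMat, ← Matrix.mul_assoc (lazy G)ᵀ,
    transpose_lazy_mul_degMatrix]
  simp only [Matrix.mul_assoc]

theorem dotProduct_degMatrix_mul_killedLazy_mulVec_self_nonneg (y : V → ℝ) :
    0 ≤ y ⬝ᵥ (G.degMatrix ℝ * G.killedLazy S) *ᵥ y := by
  rw [degMatrix_mul_killedLazy, ← mulVec_mulVec, ← mulVec_mulVec, dotProduct_mulVec,
    ← mulVec_transpose, transpose_indMat, degMatrix_mul_lazy, smul_mulVec, dotProduct_smul,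
    dotProduct_adjMatrix_add_degMatrix_mulVec_self, smul_eq_mul]
  positivity

theorem indVec_dotProduct (y : V → ℝ) : indVec S ⬝ᵥ y = ∑ v ∈ S, y v := by
  simp [dotProduct, indVec, sum_ite_mem]

theorem dotProduct_indVec_degMatrix_mulVec_indVec :
    indVec S ⬝ᵥ G.degMatrix ℝ *ᵥ indVec S = vol G S := by
  rw [indVec_dotProduct, vol]
  refine sum_congr rfl fun v hv => ?_
  simp [degMatrix, mulVec_diagonal, indVec, hv]

theorem dotProduct_indVec_adjMatrix_mulVec_indVec :
    indVec S ⬝ᵥ G.adjMatrix ℝ *ᵥ indVec S = vol G S - cut G S := by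
  rw [indVec_dotProduct, vol, cut, ← sum_sub_distrib]
  refine sum_congr rfl fun v _ => ?_
  rw [degree_eq_sum_if_adj, ← sum_add_sum_compl S, add_sub_cancel_right]
  simp [mulVec, dotProduct, indVec, sum_ite_mem]

theorem dotProduct_indVec_degMatrix_mul_killedLazy_mulVec_indVec :
    indVec S ⬝ᵥ (G.degMatrix ℝ * G.killedLazy S) *ᵥ indVec S = vol G S - cut G S / 2 := by
  rw [degMatrix_mul_killedLazy, ← mulVec_mulVec, ← mulVec_mulVec, indMat_mulVec_indVec,
    dotProduct_mulVec, ← mulVec_transpose, transpose_indMat, indMat_mulVec_indVec,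
    degMatrix_mul_lazy, smul_mulVec, dotProduct_smul, add_mulVec, dotProduct_add,
    dotProduct_indVec_adjMatrix_mulVec_indVec, dotProduct_indVec_degMatrix_mulVec_indVec,
    smul_eq_mul]
  ring

omit [DecidableEq V] in
theorem vol_pos (hdeg : ∀ v, 0 < G.degree v) (hS : S.Nonempty) : 0 < vol G S :=
  sum_pos (fun v _ => mod_cast hdeg v) hS

/-- `μ(S)` times the probability that the lazy walk from `π_S` stays in `S` for `t` steps. -/
noncomputable def stayMass (t : ℕ) : ℝ :=
  indVec S ⬝ᵥ (G.degMatrix ℝ * G.killedLazy S ^ t) *ᵥ indVec S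

theorem stayMass_zero : G.stayMass S 0 = vol G S := by
  rw [stayMass, pow_zero, Matrix.mul_one, dotProduct_indVec_degMatrix_mulVec_indVec]

theorem stayMass_one : G.stayMass S 1 = vol G S - cut G S / 2 := by
  rw [stayMass, pow_one, dotProduct_indVec_degMatrix_mul_killedLazy_mulVec_indVec]

theorem stayMass_nonneg (t : ℕ) : 0 ≤ G.stayMass S t :=
  dotProduct_mul_pow_mulVec_self_nonneg G.dotProduct_degMatrix_mulVec_self_nonneg
    (G.dotProduct_degMatrix_mul_killedLazy_mulVec_self_nonneg S)
    (G.transpose_killedLazy_mul_degMatrix S) _ t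

theorem sq_stayMass_succ_le (t : ℕ) :
    G.stayMass S (t + 1) ^ 2 ≤ G.stayMass S t * G.stayMass S (t + 2) :=
  sq_dotProduct_mul_pow_succ_mulVec_le G.dotProduct_degMatrix_mulVec_self_nonneg
    (G.dotProduct_degMatrix_mul_killedLazy_mulVec_self_nonneg S)
    (G.transpose_killedLazy_mul_degMatrix S) _ t

variable {S}

theorem stayMass_one_eq_mul (hvol : 0 < vol G S) :
    G.stayMass S 1 = (1 - conduct G S / 2) * G.stayMass S 0 := by
  rw [stayMass_one, stayMass_zero, conduct]
  field_simp

theorem mul_stayMass_le_stayMass_succ (hvol : 0 < vol G S) (t : ℕ) :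
    (1 - conduct G S / 2) * G.stayMass S t ≤ G.stayMass S (t + 1) :=
  mul_le_succ_of_sq_le_mul (G.stayMass_nonneg S) (G.sq_stayMass_succ_le S)
    (G.stayMass_one_eq_mul hvol).ge t

theorem one_sub_conduct_div_two_nonneg (hvol : 0 < vol G S) : 0 ≤ 1 - conduct G S / 2 :=
  nonneg_of_mul_nonneg_left (G.stayMass_one_eq_mul hvol ▸ G.stayMass_nonneg S 1)
    (G.stayMass_zero S ▸ hvol)

variable (S)

theorem piVec_dotProduct (y : V → ℝ) :
    piVec G S ⬝ᵥ y = indVec S ⬝ᵥ G.degMatrix ℝ *ᵥ y / vol G S := by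
  simp only [dotProduct, degMatrix, mulVec_diagonal, sum_div, piVec, indVec]
  refine sum_congr rfl fun v _ => ?_
  split_ifs <;> ring

theorem piVec_dotProduct_killedLazy_pow_mulVec (t : ℕ) :
    piVec G S ⬝ᵥ (G.killedLazy S ^ t) *ᵥ indVec S = G.stayMass S t / vol G S := by
  rw [piVec_dotProduct, mulVec_mulVec, stayMass]

end SimpleGraph

open SimpleGraph in
theorem stmt0 (G : SimpleGraph V) [DecidableRel G.Adj]
    (hdeg : ∀ v : V, 0 < G.degree v) (S : Finset V) (hS : S.Nonempty) :
    (∀ t : ℕ, 1 ≤ t →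
      piVec G S ⬝ᵥ ((indMat S * lazy G * indMat S) ^ t).mulVec (indVec S) ≥
        (1 - conduct G S / 2) *
          (piVec G S ⬝ᵥ ((indMat S * lazy G * indMat S) ^ (t - 1)).mulVec (indVec S))) ∧
    (∀ t : ℕ,
      piVec G S ⬝ᵥ ((indMat S * lazy G * indMat S) ^ t).mulVec (indVec S) ≥
        (1 - conduct G S / 2) ^ t) := by
  have hvol := G.vol_pos S hdeg hS
  have hpi (t : ℕ) : piVec G S ⬝ᵥ (indMat S * lazy G * indMat S) ^ t *ᵥ indVec S =
      G.stayMass S t / vol G S :=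
    G.piVec_dotProduct_killedLazy_pow_mulVec S t
  simp only [hpi, ge_iff_le]
  refine ⟨fun t ht => ?_, fun t => ?_⟩
  · obtain ⟨s, rfl⟩ := Nat.exists_eq_add_of_le' ht
    rw [Nat.add_sub_cancel, ← mul_div_assoc]
    exact div_le_div_of_nonneg_right (G.mul_stayMass_le_stayMass_succ hvol s) hvol.le
  · rw [le_div_iff₀ hvol, ← G.stayMass_zero S]
    exact geom_le (G.one_sub_conduct_div_two_nonneg hvol) t fun k _ =>
      G.mul_stayMass_le_stayMass_succ hvol k
end

section
/- Let G be a finite undirected simple graph in which every vertex has positive degree, let S ⊆ V be nonempty, and let M := (D⁻¹A + I)/2. For every integer t ≥ 0 there exists a subset Sᵗ ⊆ S with μ(Sᵗ) ≥ μ(S)/2 such that every vertex v ∈ Sᵗ satisfies rem(v,t,S) := 1_v'(I_S M I_S)^t 1_S ≥ (1/200)·(1 − 3φ(S)/2)^t. -/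
open Matrix Finset

variable {V : Type*} [Fintype V] [DecidableEq V]

/-- `rem v t S`: probability that the lazy walk started at `v` stays inside `S`
during its first `t` steps, i.e. `1_v' (I_S M I_S)^t 1_S`. -/
noncomputable def rem (G : SimpleGraph V) [DecidableRel G.Adj] (v : V) (t : ℕ) (S : Finset V) : ℝ :=
  ((indMat S * lazy G * indMat S) ^ t).mulVec (indVec S) v

/-!
Conjugating by `D^{1/2}` turns `I_S M I_S` into the symmetric matrix
`W = I_S (I + D^{-1/2} A D^{-1/2}) I_S / 2`, whose quadratic form lies between `0` and `‖·‖²`,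
so its eigenvalues lie in `[0, 1]`; moreover `rem(v, t, S) = (W^t x)_v / √d(v)` for `x = D^{1/2} 1_S`.
Put `θ = 1 - 3φ(S)/2`. Since `‖x‖² - ⟨x, W x⟩ = ∂(S)/2 = (1 - θ) μ(S)/3`, at least two thirds of
`‖x‖² = μ(S)` sits on the eigenvectors with eigenvalue `≥ θ`. If `B ⊆ S` collects the vertices with
`rem < θ^t/200` and `z = D^{1/2} 1_B`, entrywise positivity of `W^t` gives
`⟨z, W^t z⟩ ≤ ⟨z, W^t x⟩ < θ^t μ(S)/200`, so at most `μ(S)/200` of `‖z‖²` sits on those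
eigenvectors, and therefore `μ(S \ B) = ‖x - z‖² ≥ μ(S)/2`.
When `θ ≤ 0`, laziness alone suffices: `rem ≥ 2^{-t} ≥ |θ|^t` as `φ(S) ≤ 1`.
-/

-- `(a - b)² ≥ 7/8 a² - 7 b²`, the difference being `(a - 8 b)² / 8`.
theorem half_le_sum_sq_sub {ι : Type*} {s : Finset ι} {a b : ι → ℝ} {m : ℝ} (hm : 0 ≤ m)
    (ha : 2 * m / 3 ≤ ∑ i ∈ s, a i ^ 2) (hb : ∑ i ∈ s, b i ^ 2 ≤ m / 200) :
    m / 2 ≤ ∑ i ∈ s, (a i - b i) ^ 2 :=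
  calc m / 2 ≤ 7 / 8 * ∑ i ∈ s, a i ^ 2 - 7 * ∑ i ∈ s, b i ^ 2 := by linarith
    _ = ∑ i ∈ s, (7 / 8 * a i ^ 2 - 7 * b i ^ 2) := by rw [mul_sum, mul_sum, sum_sub_distrib]
    _ ≤ ∑ i ∈ s, (a i - b i) ^ 2 := sum_le_sum fun i _ => by nlinarith [sq_nonneg (a i - 8 * b i)]

section MatrixLemmas

variable {ι : Type*} [Fintype ι]

theorem dotProduct_mulVec_le_of_le {P : Matrix ι ι ℝ} (hP : ∀ u v, 0 ≤ P u v) {x z : ι → ℝ}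
    (hz : 0 ≤ z) (hzx : z ≤ x) : z ⬝ᵥ P *ᵥ z ≤ z ⬝ᵥ P *ᵥ x :=
  dotProduct_le_dotProduct_of_nonneg_left
    (fun u => sum_le_sum fun v _ => mul_le_mul_of_nonneg_left (hzx v) (hP u v)) hz

theorem pow_apply_self_ge [DecidableEq ι] {P : Matrix ι ι ℝ} (hP : ∀ u v, 0 ≤ P u v) (t : ℕ)
    (v : ι) : P v v ^ t ≤ (P ^ t) v v := by
  induction t with
  | zero => simp
  | succ t ih =>
    rw [pow_succ, pow_succ, mul_apply]
    exact (mul_le_mul_of_nonneg_right ih (hP v v)).trans <|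
      single_le_sum (f := fun u => (P ^ t) v u * P u v)
        (fun u _ => mul_nonneg (pow_apply_nonneg hP t v u) (hP u v)) (mem_univ v)

end MatrixLemmas

section Spectral

variable {ι : Type*} [Fintype ι] [DecidableEq ι] {W : Matrix ι ι ℝ} (hW : W.IsHermitian)

noncomputable def eigenCoeff (f : ι → ℝ) : ι → ℝ :=
  (hW.eigenvectorUnitary : Matrix ι ι ℝ)ᵀ *ᵥ f

theorem Matrix.IsHermitian.pow_eq_spectral (s : ℕ) :
    W ^ s = (hW.eigenvectorUnitary : Matrix ι ι ℝ) * diagonal (hW.eigenvalues ^ s) *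
      (hW.eigenvectorUnitary : Matrix ι ι ℝ)ᵀ := by
  conv_lhs => rw [hW.spectral_theorem]
  rw [← map_pow, diagonal_pow]
  simp [Unitary.conjStarAlgAut_apply, star_eq_conjTranspose]

theorem dotProduct_pow_mulVec_eq_sum_eigenvalues (s : ℕ) (f g : ι → ℝ) :
    f ⬝ᵥ (W ^ s *ᵥ g) =
      ∑ i, hW.eigenvalues i ^ s * (eigenCoeff hW f i * eigenCoeff hW g i) := by
  rw [hW.pow_eq_spectral, ← mulVec_mulVec, ← mulVec_mulVec, dotProduct_mulVec, ← mulVec_transpose]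
  exact sum_congr rfl fun i _ => by simp only [eigenCoeff, mulVec_diagonal, Pi.pow_apply]; ring

theorem dotProduct_eq_sum_eigenCoeff (f g : ι → ℝ) :
    f ⬝ᵥ g = ∑ i, eigenCoeff hW f i * eigenCoeff hW g i := by
  simpa using dotProduct_pow_mulVec_eq_sum_eigenvalues hW 0 f g

theorem dotProduct_self_eq_sum_sq_eigenCoeff (f : ι → ℝ) :
    f ⬝ᵥ f = ∑ i, eigenCoeff hW f i ^ 2 := by
  simp only [dotProduct_eq_sum_eigenCoeff hW f f, sq]

theorem eigenCoeff_eigenvectorBasis (i : ι) :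
    eigenCoeff hW (hW.eigenvectorBasis i) = Pi.single i 1 := by
  simpa [eigenCoeff, star_eq_conjTranspose] using hW.star_eigenvectorUnitary_mulVec i

theorem eigenvalues_mem_Icc_of_dotProduct_mulVec
    (hform : ∀ f, 0 ≤ f ⬝ᵥ W *ᵥ f ∧ f ⬝ᵥ W *ᵥ f ≤ f ⬝ᵥ f) (i : ι) :
    hW.eigenvalues i ∈ Set.Icc 0 1 := by
  set e : ι → ℝ := (hW.eigenvectorBasis i).ofLp
  have hquad : e ⬝ᵥ W *ᵥ e = hW.eigenvalues i := by
    simpa [e, eigenCoeff_eigenvectorBasis, Pi.single_apply] using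
      dotProduct_pow_mulVec_eq_sum_eigenvalues hW 1 e e
  have hnorm : e ⬝ᵥ e = 1 := by
    simpa [e, eigenCoeff_eigenvectorBasis, Pi.single_apply] using
      dotProduct_eq_sum_eigenCoeff hW e e
  simpa [hquad, hnorm] using hform e

theorem eigenCoeff_sub (f g : ι → ℝ) :
    eigenCoeff hW (f - g) = eigenCoeff hW f - eigenCoeff hW g :=
  mulVec_sub _ f g

theorem dotProduct_sub_dotProduct_mulVec_eq (f : ι → ℝ) :
    f ⬝ᵥ f - f ⬝ᵥ W *ᵥ f = ∑ i, (1 - hW.eigenvalues i) * eigenCoeff hW f i ^ 2 := by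
  have hquad := dotProduct_pow_mulVec_eq_sum_eigenvalues hW 1 f f
  rw [pow_one] at hquad
  rw [dotProduct_eq_sum_eigenCoeff hW f f, hquad, ← sum_sub_distrib]
  exact sum_congr rfl fun i _ => by ring

variable {hW}

theorem sum_sq_eigenCoeff_lt_le (hev : ∀ i, hW.eigenvalues i ≤ 1) {θ m : ℝ} (hθ : θ ≤ 1)
    (hm : 0 ≤ m) {x : ι → ℝ} (hx : x ⬝ᵥ x - x ⬝ᵥ W *ᵥ x ≤ (1 - θ) * m) :
    ∑ i with hW.eigenvalues i < θ, eigenCoeff hW x i ^ 2 ≤ m := by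
  rw [dotProduct_sub_dotProduct_mulVec_eq] at hx
  have hterm_nonneg : ∀ i ∈ univ, 0 ≤ (1 - hW.eigenvalues i) * eigenCoeff hW x i ^ 2 :=
    fun i _ => mul_nonneg (sub_nonneg.2 (hev i)) (sq_nonneg _)
  rcases hθ.lt_or_eq with hθ | rfl
  · refine le_of_mul_le_mul_left ?_ (sub_pos.2 hθ)
    calc (1 - θ) * ∑ i with hW.eigenvalues i < θ, eigenCoeff hW x i ^ 2
        ≤ ∑ i with hW.eigenvalues i < θ, (1 - hW.eigenvalues i) * eigenCoeff hW x i ^ 2 := by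
          rw [mul_sum]
          gcongr with i hi
          exact (mem_filter.1 hi).2.le
      _ ≤ ∑ i, (1 - hW.eigenvalues i) * eigenCoeff hW x i ^ 2 :=
          sum_le_sum_of_subset_of_nonneg (filter_subset _ _) fun i hi _ => hterm_nonneg i hi
      _ ≤ (1 - θ) * m := hx
  · have hzero := (sum_eq_zero_iff_of_nonneg hterm_nonneg).1
      (le_antisymm (by simpa using hx) (sum_nonneg hterm_nonneg))
    refine (sum_eq_zero fun i hi => ?_).le.trans hm
    exact (mul_eq_zero.1 (hzero i (mem_univ i))).resolve_left
      (sub_ne_zero.2 (mem_filter.1 hi).2.ne')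

theorem pow_mul_sum_sq_eigenCoeff_le (hev : ∀ i, 0 ≤ hW.eigenvalues i) {θ : ℝ} (hθ : 0 < θ)
    (t : ℕ) (z : ι → ℝ) :
    θ ^ t * ∑ i with θ ≤ hW.eigenvalues i, eigenCoeff hW z i ^ 2 ≤ z ⬝ᵥ (W ^ t *ᵥ z) := by
  rw [dotProduct_pow_mulVec_eq_sum_eigenvalues hW, mul_sum]
  calc ∑ i with θ ≤ hW.eigenvalues i, θ ^ t * eigenCoeff hW z i ^ 2
      ≤ ∑ i with θ ≤ hW.eigenvalues i, hW.eigenvalues i ^ t * eigenCoeff hW z i ^ 2 := by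
        gcongr with i hi
        exact (mem_filter.1 hi).2
    _ ≤ ∑ i, hW.eigenvalues i ^ t * (eigenCoeff hW z i * eigenCoeff hW z i) := by
        simp only [← sq]
        exact sum_le_sum_of_subset_of_nonneg (filter_subset _ _) fun i _ _ => by
          have := hev i; positivity

theorem half_le_dotProduct_sub_self (hev : ∀ i, hW.eigenvalues i ∈ Set.Icc 0 1) {θ m : ℝ}
    (hθ₀ : 0 < θ) (hθ₁ : θ ≤ 1) {t : ℕ} {x z : ι → ℝ} (hxx : x ⬝ᵥ x = m)
    (hx : x ⬝ᵥ x - x ⬝ᵥ W *ᵥ x ≤ (1 - θ) * (m / 3)) (hz : z ⬝ᵥ (W ^ t *ᵥ z) ≤ θ ^ t * (m / 200)) :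
    m / 2 ≤ (x - z) ⬝ᵥ (x - z) := by
  have hm : 0 ≤ m := hxx ▸ sum_nonneg fun i _ => mul_self_nonneg (x i)
  have hlow := sum_sq_eigenCoeff_lt_le (fun i => (hev i).2) hθ₁ (by positivity) hx
  have hhigh : 2 * m / 3 ≤ ∑ i with θ ≤ hW.eigenvalues i, eigenCoeff hW x i ^ 2 := by
    have htotal := sum_filter_add_sum_filter_not univ (θ ≤ hW.eigenvalues ·)
      (eigenCoeff hW x · ^ 2)
    simp only [not_le] at htotal
    linarith [dotProduct_self_eq_sum_sq_eigenCoeff hW x]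
  have hzhigh : ∑ i with θ ≤ hW.eigenvalues i, eigenCoeff hW z i ^ 2 ≤ m / 200 :=
    le_of_mul_le_mul_left ((pow_mul_sum_sq_eigenCoeff_le (fun i => (hev i).1) hθ₀ t z).trans hz)
      (pow_pos hθ₀ t)
  calc m / 2 ≤ ∑ i with θ ≤ hW.eigenvalues i, (eigenCoeff hW x i - eigenCoeff hW z i) ^ 2 :=
        half_le_sum_sq_sub hm hhigh hzhigh
    _ ≤ ∑ i, eigenCoeff hW (x - z) i ^ 2 := by
        rw [eigenCoeff_sub]
        exact sum_le_sum_of_subset_of_nonneg (filter_subset _ _) fun i _ _ => sq_nonneg _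
    _ = (x - z) ⬝ᵥ (x - z) := (dotProduct_self_eq_sum_sq_eigenCoeff hW _).symm

end Spectral

def compress (S : Finset V) (P : Matrix V V ℝ) : Matrix V V ℝ := indMat S * P * indMat S

section Compress

variable (S : Finset V) {P : Matrix V V ℝ}

theorem compress_apply (u v : V) :
    compress S P u v = if u ∈ S ∧ v ∈ S then P u v else 0 := by
  by_cases hu : u ∈ S <;> by_cases hv : v ∈ S <;>
    simp [compress, indMat, diagonal_mul, mul_diagonal, hu, hv]

theorem compress_apply_nonneg (hP : ∀ u v, 0 ≤ P u v) (u v : V) : 0 ≤ compress S P u v := by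
  rw [compress_apply]
  split_ifs
  exacts [hP u v, le_rfl]

theorem dotProduct_compress_mulVec (f : V → ℝ) :
    f ⬝ᵥ compress S P *ᵥ f = (indMat S *ᵥ f) ⬝ᵥ P *ᵥ (indMat S *ᵥ f) := by
  rw [compress, ← mulVec_mulVec, ← mulVec_mulVec, dotProduct_mulVec, ← mulVec_transpose, indMat,
    diagonal_transpose]

theorem indMat_mulVec_dotProduct_self_le (f : V → ℝ) :
    (indMat S *ᵥ f) ⬝ᵥ (indMat S *ᵥ f) ≤ f ⬝ᵥ f := by
  refine sum_le_sum fun v _ => ?_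
  by_cases hv : v ∈ S <;> simp [indMat, mulVec_diagonal, hv, mul_self_nonneg]

theorem isHermitian_compress (hP : P.IsHermitian) : (compress S P).IsHermitian := by
  have h := isHermitian_conjTranspose_mul_mul (indMat S) hP
  rwa [indMat, diagonal_conjTranspose, star_trivial] at h

theorem semiconjBy_compress {d : V → ℝ} {Q : Matrix V V ℝ} (h : SemiconjBy (diagonal d) P Q) :
    SemiconjBy (diagonal d) (compress S P) (compress S Q) := by
  have hd : Commute (diagonal d) (indMat S) := commute_diagonal _ _
  rw [SemiconjBy, compress, ← mul_assoc, ← mul_assoc, hd.eq, mul_assoc (indMat S), h.eq,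
    mul_assoc, mul_assoc, hd.eq, compress]
  simp only [mul_assoc]

end Compress

section Graph

variable (G : SimpleGraph V) [DecidableRel G.Adj]

noncomputable def sqrtDeg (v : V) : ℝ := √(G.degree v)

noncomputable def normLazy : Matrix V V ℝ :=
  (2 : ℝ)⁻¹ • (diagonal (sqrtDeg G)⁻¹ * G.adjMatrix ℝ * diagonal (sqrtDeg G)⁻¹ + 1)

noncomputable def sqrtDegInd (A : Finset V) : V → ℝ := diagonal (sqrtDeg G) *ᵥ indVec A

variable {G}

omit [DecidableEq V] in
theorem sqrtDeg_pos (hdeg : ∀ v, 0 < G.degree v) (v : V) : 0 < sqrtDeg G v :=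
  Real.sqrt_pos.2 (by exact_mod_cast hdeg v)

omit [DecidableEq V] in
theorem sqrtDeg_mul_self (v : V) : sqrtDeg G v * sqrtDeg G v = G.degree v :=
  Real.mul_self_sqrt (Nat.cast_nonneg _)

theorem lazy_apply (u v : V) :
    lazy G u v = 2⁻¹ * ((G.degree u : ℝ)⁻¹ * G.adjMatrix ℝ u v + if u = v then 1 else 0) := by
  simp only [lazy, Matrix.smul_apply, Matrix.add_apply, diagonal_mul, one_apply, smul_eq_mul]

theorem lazy_apply_nonneg (u v : V) : 0 ≤ lazy G u v := by
  rw [lazy_apply, SimpleGraph.adjMatrix_apply]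
  positivity

theorem lazy_apply_self (v : V) : lazy G v v = 2⁻¹ := by
  simp [lazy_apply]

theorem isHermitian_normLazy : (normLazy G).IsHermitian := by
  simp [normLazy, IsHermitian, mul_assoc]

theorem normLazy_apply_nonneg (u v : V) : 0 ≤ normLazy G u v := by
  simp only [normLazy, sqrtDeg, Matrix.smul_apply, Matrix.add_apply, diagonal_mul, mul_diagonal,
    one_apply, SimpleGraph.adjMatrix_apply, Pi.inv_apply, smul_eq_mul]
  positivity

theorem semiconjBy_sqrtDeg_lazy (hdeg : ∀ v, 0 < G.degree v) :
    SemiconjBy (diagonal (sqrtDeg G)) (lazy G) (normLazy G) := by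
  have hsd v := (sqrtDeg_pos hdeg v).ne'
  have h₁ : diagonal (sqrtDeg G) * diagonal (fun v => (G.degree v : ℝ)⁻¹) =
      diagonal (sqrtDeg G)⁻¹ := by
    rw [diagonal_mul_diagonal]
    congr 1
    funext v
    rw [← sqrtDeg_mul_self, Pi.inv_apply]
    field_simp
  have h₂ : diagonal (sqrtDeg G)⁻¹ * diagonal (sqrtDeg G) = 1 := by
    rw [diagonal_mul_diagonal, ← diagonal_one]
    congr 1
    funext v
    exact inv_mul_cancel₀ (hsd v)
  rw [SemiconjBy, lazy, normLazy, mul_smul_comm, smul_mul_assoc, mul_add, add_mul, ← mul_assoc, h₁,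
    mul_assoc _ _ (diagonal (sqrtDeg G)), h₂, mul_one, mul_one, one_mul]

theorem pow_compress_normLazy_mulVec_sqrtDegInd (hdeg : ∀ v, 0 < G.degree v) (S : Finset V)
    (t : ℕ) (v : V) :
    (compress S (normLazy G) ^ t *ᵥ sqrtDegInd G S) v = sqrtDeg G v * rem G v t S := by
  have h := ((semiconjBy_compress S (semiconjBy_sqrtDeg_lazy hdeg)).pow_right t).eq
  rw [sqrtDegInd, mulVec_mulVec, ← h, ← mulVec_mulVec, mulVec_diagonal]
  rfl

omit [DecidableEq V] in
theorem sum_adjMatrix_apply (u : V) : ∑ v, G.adjMatrix ℝ u v = G.degree u := by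
  simp [SimpleGraph.adjMatrix_apply, sum_boole, ← SimpleGraph.neighborFinset_eq_filter]

omit [DecidableEq V] in
theorem sum_adjMatrix_mul (f : V → ℝ) :
    ∑ u, ∑ v, G.adjMatrix ℝ u v * f u = ∑ u, (G.degree u : ℝ) * f u := by
  simp_rw [← sum_mul, sum_adjMatrix_apply]

omit [DecidableEq V] in
theorem abs_dotProduct_adjMatrix_mulVec_le (g : V → ℝ) :
    |g ⬝ᵥ G.adjMatrix ℝ *ᵥ g| ≤ ∑ v, (G.degree v : ℝ) * g v ^ 2 := by
  have key : ∀ s : ℝ, s ^ 2 = 1 →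
      0 ≤ 2 * (∑ v, (G.degree v : ℝ) * g v ^ 2) + 2 * s * (g ⬝ᵥ G.adjMatrix ℝ *ᵥ g) := by
    intro s hs
    have hsymm : ∑ u, ∑ v, G.adjMatrix ℝ u v * g v ^ 2 = ∑ u, ∑ v, G.adjMatrix ℝ u v * g u ^ 2 := by
      rw [sum_comm]
      simp_rw [G.adjMatrix_apply, G.adj_comm]
    calc 0 ≤ ∑ u, ∑ v, G.adjMatrix ℝ u v * (g u + s * g v) ^ 2 :=
          sum_nonneg fun u _ => sum_nonneg fun v _ => by rw [G.adjMatrix_apply]; positivity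
      _ = ∑ u, ∑ v, G.adjMatrix ℝ u v * g u ^ 2 + 2 * s * ∑ u, ∑ v, G.adjMatrix ℝ u v * g u * g v
            + s ^ 2 * ∑ u, ∑ v, G.adjMatrix ℝ u v * g v ^ 2 := by
        simp only [mul_sum, ← sum_add_distrib]
        exact sum_congr rfl fun u _ => sum_congr rfl fun v _ => by ring
      _ = _ := by
        have hquad : g ⬝ᵥ G.adjMatrix ℝ *ᵥ g = ∑ u, ∑ v, G.adjMatrix ℝ u v * g u * g v := by
          simp only [dotProduct, mulVec, mul_sum]
          exact sum_congr rfl fun u _ => sum_congr rfl fun v _ => by ring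
        rw [hs, one_mul, hsymm, sum_adjMatrix_mul (g · ^ 2), hquad]
        ring
  rw [abs_le]
  constructor <;> linarith [key 1 (by norm_num), key (-1) (by norm_num)]

theorem dotProduct_normLazy_mulVec (h : V → ℝ) :
    h ⬝ᵥ normLazy G *ᵥ h = 2⁻¹ * ((diagonal (sqrtDeg G)⁻¹ *ᵥ h) ⬝ᵥ
      G.adjMatrix ℝ *ᵥ (diagonal (sqrtDeg G)⁻¹ *ᵥ h) + h ⬝ᵥ h) := by
  rw [normLazy, smul_mulVec, dotProduct_smul, add_mulVec, dotProduct_add, one_mulVec,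
    ← mulVec_mulVec, ← mulVec_mulVec, dotProduct_mulVec h (diagonal _), ← mulVec_transpose,
    diagonal_transpose, smul_eq_mul]

theorem sum_degree_mul_sq_inv_sqrtDeg (hdeg : ∀ v, 0 < G.degree v) (h : V → ℝ) :
    ∑ v, (G.degree v : ℝ) * (diagonal (sqrtDeg G)⁻¹ *ᵥ h) v ^ 2 = h ⬝ᵥ h := by
  refine sum_congr rfl fun v _ => ?_
  have := (sqrtDeg_pos hdeg v).ne'
  rw [mulVec_diagonal, ← sqrtDeg_mul_self, Pi.inv_apply]
  field_simp

theorem dotProduct_normLazy_mulVec_mem_Icc (hdeg : ∀ v, 0 < G.degree v) (h : V → ℝ) :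
    0 ≤ h ⬝ᵥ normLazy G *ᵥ h ∧ h ⬝ᵥ normLazy G *ᵥ h ≤ h ⬝ᵥ h := by
  have hbound := abs_dotProduct_adjMatrix_mulVec_le (G := G) (diagonal (sqrtDeg G)⁻¹ *ᵥ h)
  rw [sum_degree_mul_sq_inv_sqrtDeg hdeg, abs_le] at hbound
  rw [dotProduct_normLazy_mulVec]
  constructor <;> linarith [hbound.1, hbound.2]

theorem dotProduct_compress_normLazy_mulVec_mem_Icc (hdeg : ∀ v, 0 < G.degree v)
    (S : Finset V) (f : V → ℝ) :
    0 ≤ f ⬝ᵥ compress S (normLazy G) *ᵥ f ∧ f ⬝ᵥ compress S (normLazy G) *ᵥ f ≤ f ⬝ᵥ f := by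
  rw [dotProduct_compress_mulVec]
  have := dotProduct_normLazy_mulVec_mem_Icc hdeg (indMat S *ᵥ f)
  exact ⟨this.1, this.2.trans (indMat_mulVec_dotProduct_self_le S f)⟩

theorem indVec_dotProduct_adjMatrix_mulVec (S : Finset V) :
    indVec S ⬝ᵥ G.adjMatrix ℝ *ᵥ indVec S = vol G S - cut G S := by
  have hrow (u : V) : ∑ v ∈ S, G.adjMatrix ℝ u v =
      G.degree u - ∑ v ∈ Sᶜ, if G.Adj u v then (1 : ℝ) else 0 := by
    rw [← sum_adjMatrix_apply, ← sum_add_sum_compl S]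
    simp [SimpleGraph.adjMatrix_apply]
  simp only [vol, cut, ← sum_sub_distrib, ← hrow]
  simp [dotProduct, mulVec, indVec]

theorem sqrtDegInd_apply (A : Finset V) (v : V) :
    sqrtDegInd G A v = if v ∈ A then sqrtDeg G v else 0 := by
  simp [sqrtDegInd, mulVec_diagonal, indVec]

theorem sqrtDegInd_eq_indicator (A : Finset V) :
    sqrtDegInd G A = (A : Set V).indicator (sqrtDeg G) := by
  ext v
  simp [sqrtDegInd_apply, Set.indicator_apply]

theorem sqrtDegInd_dotProduct_self (A : Finset V) : sqrtDegInd G A ⬝ᵥ sqrtDegInd G A = vol G A := by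
  simp [dotProduct, sqrtDegInd_apply, vol, sqrtDeg_mul_self]

theorem sqrtDegInd_sub_sdiff {A S : Finset V} (hA : A ⊆ S) :
    sqrtDegInd G S - sqrtDegInd G (S \ A) = sqrtDegInd G A := by
  ext v
  by_cases hv : v ∈ A
  · simp [sqrtDegInd_apply, hv, hA hv]
  · by_cases hvS : v ∈ S <;> simp [sqrtDegInd_apply, hv, hvS]

theorem sqrtDegInd_dotProduct_compress_normLazy (hdeg : ∀ v, 0 < G.degree v) (S : Finset V) :
    sqrtDegInd G S ⬝ᵥ compress S (normLazy G) *ᵥ sqrtDegInd G S = vol G S - cut G S / 2 := by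
  have hrestrict : indMat S *ᵥ sqrtDegInd G S = sqrtDegInd G S := by
    ext v
    by_cases hv : v ∈ S <;> simp [indMat, mulVec_diagonal, sqrtDegInd_apply, hv]
  have hnormalize : diagonal (sqrtDeg G)⁻¹ *ᵥ sqrtDegInd G S = indVec S := by
    ext v
    have := (sqrtDeg_pos hdeg v).ne'
    by_cases hv : v ∈ S <;> simp [mulVec_diagonal, sqrtDegInd_apply, indVec, hv, this]
  rw [dotProduct_compress_mulVec, hrestrict, dotProduct_normLazy_mulVec, hnormalize,
    indVec_dotProduct_adjMatrix_mulVec, sqrtDegInd_dotProduct_self]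
  ring

omit [DecidableEq V] in
theorem vol_pos (hdeg : ∀ v, 0 < G.degree v) {S : Finset V} (hS : S.Nonempty) : 0 < vol G S :=
  sum_pos (fun v _ => by exact_mod_cast hdeg v) hS

omit [DecidableEq V] in
theorem vol_mono {A B : Finset V} (h : A ⊆ B) : vol G A ≤ vol G B :=
  sum_le_sum_of_subset_of_nonneg h fun _ _ _ => Nat.cast_nonneg _

theorem cut_nonneg (S : Finset V) : 0 ≤ cut G S :=
  sum_nonneg fun _ _ => sum_nonneg fun _ _ => by positivity

theorem cut_le_vol (S : Finset V) : cut G S ≤ vol G S := by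
  have h : 0 ≤ indVec S ⬝ᵥ G.adjMatrix ℝ *ᵥ indVec S := by
    refine dotProduct_nonneg_of_nonneg (fun v => ?_) fun u => sum_nonneg fun v _ => ?_ <;>
      simp only [indVec, SimpleGraph.adjMatrix_apply] <;> positivity
  linarith [indVec_dotProduct_adjMatrix_mulVec (G := G) S]

theorem sqrtDegInd_dotProduct_pow_mulVec_le (hdeg : ∀ v, 0 < G.degree v) {B S : Finset V}
    (hB : B ⊆ S) {t : ℕ} {τ : ℝ} (hτ : 0 ≤ τ) (hrem : ∀ v ∈ B, rem G v t S ≤ τ) :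
    sqrtDegInd G B ⬝ᵥ compress S (normLazy G) ^ t *ᵥ sqrtDegInd G B ≤ vol G S * τ := by
  have hW := pow_apply_nonneg (compress_apply_nonneg S (normLazy_apply_nonneg (G := G))) t
  calc sqrtDegInd G B ⬝ᵥ compress S (normLazy G) ^ t *ᵥ sqrtDegInd G B
      ≤ sqrtDegInd G B ⬝ᵥ compress S (normLazy G) ^ t *ᵥ sqrtDegInd G S := by
        simp only [sqrtDegInd_eq_indicator]
        exact dotProduct_mulVec_le_of_le hW (Set.indicator_nonneg fun v _ => Real.sqrt_nonneg _)
          (Set.indicator_le_indicator_of_subset hB fun v => Real.sqrt_nonneg _)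
    _ = ∑ v ∈ B, (G.degree v : ℝ) * rem G v t S := by
        simp [dotProduct, pow_compress_normLazy_mulVec_sqrtDegInd hdeg, sqrtDegInd_apply,
          ← mul_assoc, sqrtDeg_mul_self]
    _ ≤ vol G B * τ := by
        rw [vol, sum_mul]
        exact sum_le_sum fun v hv => mul_le_mul_of_nonneg_left (hrem v hv) (Nat.cast_nonneg _)
    _ ≤ vol G S * τ := mul_le_mul_of_nonneg_right (vol_mono hB) hτ

theorem inv_two_pow_le_rem {S : Finset V} {v : V} (hv : v ∈ S) (t : ℕ) :
    (2⁻¹ : ℝ) ^ t ≤ rem G v t S := by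
  have hN := compress_apply_nonneg S (lazy_apply_nonneg (G := G))
  have hind : 0 ≤ indVec S := fun u => by unfold indVec; positivity
  calc (2⁻¹ : ℝ) ^ t = compress S (lazy G) v v ^ t := by
        rw [compress_apply, if_pos ⟨hv, hv⟩, lazy_apply_self]
    _ ≤ (compress S (lazy G) ^ t) v v := pow_apply_self_ge hN t v
    _ = (compress S (lazy G) ^ t) v v * indVec S v := by simp [indVec, hv]
    _ ≤ rem G v t S := single_le_sum (f := fun u => (compress S (lazy G) ^ t) v u * indVec S u)
        (fun u _ => mul_nonneg (pow_apply_nonneg hN t v u) (hind u)) (mem_univ v)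

theorem stmt1 (G : SimpleGraph V) [DecidableRel G.Adj]
    (hdeg : ∀ v : V, 0 < G.degree v) (S : Finset V) (hS : S.Nonempty) (t : ℕ) :
    ∃ St : Finset V, St ⊆ S ∧ vol G S / 2 ≤ vol G St ∧
      ∀ v ∈ St, rem G v t S ≥ (1 / 200) * (1 - 3 * conduct G S / 2) ^ t := by
  have hvol := vol_pos hdeg hS
  have hφ₀ : 0 ≤ conduct G S := div_nonneg (cut_nonneg S) hvol.le
  have hφ₁ : conduct G S ≤ 1 := div_le_one_of_le₀ (cut_le_vol S) hvol.le
  set θ := 1 - 3 * conduct G S / 2 with hθ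
  rcases le_or_gt θ 0 with hθ₀ | hθ₀
  · refine ⟨S, subset_rfl, by linarith, fun v hv => ?_⟩
    calc 1 / 200 * θ ^ t ≤ |θ| ^ t := by
          have := pow_nonneg (abs_nonneg θ) t
          linarith [abs_pow θ t ▸ le_abs_self (θ ^ t)]
      _ ≤ 2⁻¹ ^ t := pow_le_pow_left₀ (abs_nonneg θ) (abs_le.2 ⟨by linarith, by linarith⟩) t
      _ ≤ rem G v t S := inv_two_pow_le_rem hv t
  set St := S.filter (fun v => 1 / 200 * θ ^ t ≤ rem G v t S)
  refine ⟨St, filter_subset _ _, ?_, fun v hv => (mem_filter.1 hv).2⟩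
  have hW := isHermitian_compress S (isHermitian_normLazy (G := G))
  have hev := eigenvalues_mem_Icc_of_dotProduct_mulVec hW
    (dotProduct_compress_normLazy_mulVec_mem_Icc hdeg S)
  have hcore := half_le_dotProduct_sub_self hev hθ₀ (by linarith) (t := t)
    (z := sqrtDegInd G (S \ St)) (sqrtDegInd_dotProduct_self (G := G) S) ?_ ?_
  · rwa [sqrtDegInd_sub_sdiff (filter_subset _ _), sqrtDegInd_dotProduct_self] at hcore
  · have hcut : (1 - θ) * (vol G S / 3) = cut G S / 2 := by
      rw [hθ, conduct]
      field_simp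
      ring
    rw [sqrtDegInd_dotProduct_self, sqrtDegInd_dotProduct_compress_normLazy hdeg]
    linarith
  · refine (sqrtDegInd_dotProduct_pow_mulVec_le hdeg sdiff_subset (τ := 1 / 200 * θ ^ t)
      (by positivity) fun v hv => ?_).trans_eq (by ring)
    obtain ⟨hvS, hvSt⟩ := mem_sdiff.1 hv
    exact le_of_not_ge fun h => hvSt (mem_filter.2 ⟨hvS, h⟩)
end Graph
end

section
/- Let A be a symmetric matrix with nonnegative real entries indexed by a finite set V, with all weighted degrees d(v) := Σ_u A(v,u) positive, let W := D⁻¹A, and let S ⊆ V be nonempty. Then for every integer t ≥ 1, π_S' (I_S W I_S)^{2t} 1_S ≥ (1 − φ(S))^{2t}. -/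
open Matrix Finset

variable {V : Type*} [Fintype V] [DecidableEq V]

/-- Weighted degree `d(v) = ∑ u, A v u`. -/
noncomputable def wdeg (A : Matrix V V ℝ) (v : V) : ℝ := ∑ u, A v u

/-- Weighted volume of a set of vertices. -/
noncomputable def wvol (A : Matrix V V ℝ) (S : Finset V) : ℝ := ∑ v ∈ S, wdeg A v

/-- Weighted size of the boundary of `S`. -/
noncomputable def wcut (A : Matrix V V ℝ) (S : Finset V) : ℝ := ∑ u ∈ S, ∑ v ∈ Sᶜ, A u v

/-- Weighted conductance of `S`. -/
noncomputable def wcond (A : Matrix V V ℝ) (S : Finset V) : ℝ := wcut A S / wvol A S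

/-- Random walk transition matrix `W = D⁻¹ A`. -/
noncomputable def walk (A : Matrix V V ℝ) : Matrix V V ℝ :=
  Matrix.diagonal (fun v => (wdeg A v)⁻¹) * A

/-- The distribution `π_S` proportional to weighted degrees on `S`. -/
noncomputable def wpi (A : Matrix V V ℝ) (S : Finset V) : V → ℝ :=
  fun v => if v ∈ S then wdeg A v / wvol A S else 0

/-!
For the weighted form `⟨x, y⟩ = ∑ d(v) x(v) y(v)`, the restricted walk `M = I_S W I_S` is
self-adjoint because `A` is symmetric. Hence `c k = ⟨M^k 1_S, M^k 1_S⟩ = ⟨1_S, M^(2k) 1_S⟩`, and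
Cauchy–Schwarz makes `c` log-convex, which gives `c 1 ^ t * c 0 ≤ c 0 ^ t * c t`. A second
Cauchy–Schwarz gives `⟨1_S, M 1_S⟩² ≤ c 0 * c 1`, and finally `⟨1_S, 1_S⟩ = μ(S)` and
`⟨1_S, M 1_S⟩ = μ(S) - ∂(S)`.
-/

theorem pow_mul_le_pow_mul_of_sq_le_mul {c : ℕ → ℝ} (hc : ∀ k, 0 ≤ c k)
    (hlc : ∀ k, c (k + 1) ^ 2 ≤ c k * c (k + 2)) (k : ℕ) :
    c 1 ^ k * c 0 ≤ c 0 ^ k * c k := by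
  have ratio : ∀ k, c 1 * c k ≤ c 0 * c (k + 1) := by
    intro k
    induction k with
    | zero => rw [mul_comm]
    | succ k ih =>
      rcases (hc (k + 1)).eq_or_lt with h | h
      · rw [← h, mul_zero]
        exact mul_nonneg (hc 0) (hc (k + 2))
      · refine le_of_mul_le_mul_right ?_ h
        nlinarith [mul_le_mul_of_nonneg_left (hlc k) (hc 1),
          mul_le_mul_of_nonneg_right ih (hc (k + 2))]
  induction k with
  | zero => simp
  | succ k ih =>
    calc c 1 ^ (k + 1) * c 0 = c 1 * (c 1 ^ k * c 0) := by ring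
      _ ≤ c 1 * (c 0 ^ k * c k) := mul_le_mul_of_nonneg_left ih (hc 1)
      _ = c 0 ^ k * (c 1 * c k) := by ring
      _ ≤ c 0 ^ k * (c 0 * c (k + 1)) :=
          mul_le_mul_of_nonneg_left (ratio k) (pow_nonneg (hc 0) k)
      _ = c 0 ^ (k + 1) * c (k + 1) := by ring

theorem mul_mul_self_nonneg {d : ℝ} (hd : 0 ≤ d) (x : ℝ) : 0 ≤ d * x * x := by
  rw [mul_assoc]
  exact mul_nonneg hd (mul_self_nonneg x)

section WeightedDot

variable {ι : Type*} [Fintype ι]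

noncomputable def wdot (d x y : ι → ℝ) : ℝ := ∑ i, d i * x i * y i

theorem wdot_self_nonneg {d : ι → ℝ} (hd : ∀ i, 0 ≤ d i) (x : ι → ℝ) : 0 ≤ wdot d x x :=
  sum_nonneg fun i _ => mul_mul_self_nonneg (hd i) (x i)

theorem sq_wdot_le {d : ι → ℝ} (hd : ∀ i, 0 ≤ d i) (x y : ι → ℝ) :
    wdot d x y ^ 2 ≤ wdot d x x * wdot d y y :=
  sum_sq_le_sum_mul_sum_of_sq_le_mul _ (fun i _ => mul_mul_self_nonneg (hd i) (x i))
    (fun i _ => mul_mul_self_nonneg (hd i) (y i)) (fun i _ => le_of_eq (by ring))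

theorem wdot_mulVec_comm {d : ι → ℝ} {M : Matrix ι ι ℝ} (hM : ∀ i j, d i * M i j = d j * M j i)
    (x y : ι → ℝ) : wdot d x (M *ᵥ y) = wdot d (M *ᵥ x) y := by
  simp only [wdot, mulVec, dotProduct, mul_sum, sum_mul]
  rw [sum_comm]
  refine sum_congr rfl fun i _ => sum_congr rfl fun j _ => ?_
  linear_combination (x j * y i) * hM j i

theorem wdot_pow_add_mulVec [DecidableEq ι] {d : ι → ℝ} {M : Matrix ι ι ℝ}
    (hM : ∀ i j, d i * M i j = d j * M j i) (x : ι → ℝ) (m n : ℕ) :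
    wdot d x ((M ^ (m + n)) *ᵥ x) = wdot d ((M ^ m) *ᵥ x) ((M ^ n) *ᵥ x) := by
  induction m generalizing n with
  | zero => simp
  | succ m ih =>
    rw [show m + 1 + n = m + (n + 1) by omega, ih, pow_succ' M n, pow_succ' M m,
      ← mulVec_mulVec, ← mulVec_mulVec, wdot_mulVec_comm hM]

theorem wdot_mulVec_pow_le [DecidableEq ι] {d : ι → ℝ} (hd : ∀ i, 0 ≤ d i) {M : Matrix ι ι ℝ}
    (hM : ∀ i j, d i * M i j = d j * M j i) (x : ι → ℝ) (t : ℕ) :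
    wdot d x (M *ᵥ x) ^ (2 * t) * wdot d x x ≤
      wdot d x x ^ (2 * t) * wdot d x ((M ^ (2 * t)) *ᵥ x) := by
  obtain ⟨c, hc⟩ : ∃ c : ℕ → ℝ, c = fun k => wdot d ((M ^ k) *ᵥ x) ((M ^ k) *ᵥ x) := ⟨_, rfl⟩
  have hc_nonneg : ∀ k, 0 ≤ c k := fun k => hc ▸ wdot_self_nonneg hd _
  have hc0 : c 0 = wdot d x x := by simp [hc]
  have hc1 : c 1 = wdot d (M *ᵥ x) (M *ᵥ x) := by simp [hc]
  have hct : c t = wdot d x ((M ^ (2 * t)) *ᵥ x) := by rw [hc, two_mul, wdot_pow_add_mulVec hM]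
  have log_convex : ∀ k, c (k + 1) ^ 2 ≤ c k * c (k + 2) := fun k => by
    have h := sq_wdot_le hd ((M ^ k) *ᵥ x) ((M ^ (k + 2)) *ᵥ x)
    rw [← wdot_pow_add_mulVec hM, show k + (k + 2) = (k + 1) + (k + 1) by omega,
      wdot_pow_add_mulVec hM] at h
    simpa only [hc] using h
  have h1 : wdot d x (M *ᵥ x) ^ 2 ≤ c 0 * c 1 := by
    rw [hc0, hc1]
    exact sq_wdot_le hd x (M *ᵥ x)
  calc wdot d x (M *ᵥ x) ^ (2 * t) * wdot d x x
      = (wdot d x (M *ᵥ x) ^ 2) ^ t * c 0 := by rw [← pow_mul, hc0]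
    _ ≤ (c 0 * c 1) ^ t * c 0 :=
        mul_le_mul_of_nonneg_right (pow_le_pow_left₀ (sq_nonneg _) h1 t) (hc_nonneg 0)
    _ = c 0 ^ t * (c 1 ^ t * c 0) := by ring
    _ ≤ c 0 ^ t * (c 0 ^ t * c t) := mul_le_mul_of_nonneg_left
        (pow_mul_le_pow_mul_of_sq_le_mul hc_nonneg log_convex t) (pow_nonneg (hc_nonneg 0) t)
    _ = wdot d x x ^ (2 * t) * wdot d x ((M ^ (2 * t)) *ᵥ x) := by rw [← hc0, ← hct]; ring

end WeightedDot

theorem indMat_mul_walk_mul_indMat_apply (A : Matrix V V ℝ) (S : Finset V) (u v : V) :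
    (indMat S * walk A * indMat S) u v = indVec S u * ((wdeg A u)⁻¹ * A u v) * indVec S v := by
  simp [indMat, indVec, walk, mul_diagonal, diagonal_mul]

theorem wdeg_mul_indMat_mul_walk_mul_indMat_comm {A : Matrix V V ℝ} (hsym : A.IsSymm)
    (hd : ∀ v, wdeg A v ≠ 0) (S : Finset V) (u v : V) :
    wdeg A u * (indMat S * walk A * indMat S) u v =
      wdeg A v * (indMat S * walk A * indMat S) v u := by
  simp only [indMat_mul_walk_mul_indMat_apply, hsym.apply u v]
  field_simp [hd u, hd v]

theorem indMat_mul_walk_mul_indMat_mulVec_indVec (A : Matrix V V ℝ) (S : Finset V) (v : V) :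
    ((indMat S * walk A * indMat S) *ᵥ indVec S) v =
      indVec S v * ((wdeg A v)⁻¹ * ∑ u ∈ S, A v u) := by
  simp [mulVec, dotProduct, indMat_mul_walk_mul_indMat_apply, indVec, mul_sum]

theorem wdot_indVec_self (A : Matrix V V ℝ) (S : Finset V) :
    wdot (wdeg A) (indVec S) (indVec S) = wvol A S := by
  simp [wdot, wvol, indVec]

theorem wdot_indVec_mulVec_indVec {A : Matrix V V ℝ} (hd : ∀ v, wdeg A v ≠ 0) (S : Finset V) :
    wdot (wdeg A) (indVec S) ((indMat S * walk A * indMat S) *ᵥ indVec S) =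
      wvol A S - wcut A S := by
  have inner_edges : ∀ v, ∑ u ∈ S, A v u = wdeg A v - ∑ u ∈ Sᶜ, A v u := fun v => by
    rw [wdeg, ← sum_add_sum_compl S]
    ring
  simp only [wdot, indMat_mul_walk_mul_indMat_mulVec_indVec, wvol, wcut, ← sum_sub_distrib,
    ← inner_edges]
  simp [indVec, hd]

theorem wpi_dotProduct (A : Matrix V V ℝ) (S : Finset V) (y : V → ℝ) :
    wpi A S ⬝ᵥ y = wdot (wdeg A) (indVec S) y / wvol A S := by
  simp only [dotProduct, wdot, sum_div]
  refine sum_congr rfl fun v _ => ?_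
  by_cases hv : v ∈ S <;> simp [wpi, indVec, hv, div_mul_eq_mul_div]

theorem stmt12_general (A : Matrix V V ℝ) (hsym : A.IsSymm)
    (hd : ∀ v, 0 < wdeg A v) (S : Finset V) (hS : S.Nonempty) (t : ℕ) :
    wpi A S ⬝ᵥ ((indMat S * walk A * indMat S) ^ (2 * t)).mulVec (indVec S) ≥
      (1 - wcond A S) ^ (2 * t) := by
  have hvol : 0 < wvol A S := sum_pos (fun v _ => hd v) hS
  have hd₀ : ∀ v, wdeg A v ≠ 0 := fun v => (hd v).ne'
  have key := wdot_mulVec_pow_le (fun v => (hd v).le)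
    (wdeg_mul_indMat_mul_walk_mul_indMat_comm hsym hd₀ S) (indVec S) t
  rw [wdot_indVec_self, wdot_indVec_mulVec_indVec hd₀] at key
  rw [wpi_dotProduct, wcond, ge_iff_le, one_sub_div hvol.ne', div_pow,
    div_le_div_iff₀ (pow_pos hvol _) hvol]
  linarith

theorem stmt12 (A : Matrix V V ℝ) (hsym : A.IsSymm) (hnn : ∀ u v, 0 ≤ A u v)
    (hd : ∀ v, 0 < wdeg A v) (S : Finset V) (hS : S.Nonempty) (t : ℕ) (ht : 1 ≤ t) :
    wpi A S ⬝ᵥ ((indMat S * walk A * indMat S) ^ (2 * t)).mulVec (indVec S) ≥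
      (1 - wcond A S) ^ (2 * t) :=
  stmt12_general A hsym hd S hS t
end
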